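/- arXiv:math/0408276 — 2 statements merged into one kernel-verified Lean document; each statement's English description precedes it below -/
import Mathlib

section
/- Representation of the continuation value via cash flows: Assume E[f_s(X_s)] < ∞ and E[|q_s(X_s)|] < ∞ for all s. Then for every t < T and every 0 ≤ w ≤ T−t−1, q_t(X_t) = E[ ϑ_{t+1:w}(f,q)(X_0,…,X_T) | σ(X_t) ] P-almost surely. In particular, for w = 0 this is the dynamic programming recursion q_t(X_t) = E[max(f_{t+1}(X_{t+1}), q_{t+1}(X_{t+1})) | σ(X_t)], and for w = T−t−1 it expresses q_t as the conditional expectation of the payoff obtained by applying the stopping rule induced by q itself. -/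
open MeasureTheory Filter
open scoped ENNReal

/-!
Induction on `w`. Passing from `ϑ_{t+1:w}` to `ϑ_{t+1:w+1}` adds
`max(f_{s+1}, q_{s+1})(X_{s+1}) - q_s(X_s)`, `s = t + 1 + w`, on the event that `q` has not
stopped by time `s`. That event is `σ(X_0, …, X_s)`-measurable, and by the Markov property
`E[max(f_{s+1}, q_{s+1})(X_{s+1}) | σ(X_0, …, X_s)] = q_s(X_s)`, so the increment has conditional
expectation zero given `σ(X_0, …, X_s)`, hence given `σ(X_t)`. The Markov property is assumed
only for bounded functions; truncation and the `L¹`-continuity of conditional expectation extend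
it to integrable ones.
-/

/-- The cash flow function `ϑ_{t:w}(f,h)` along a path `x`:
`ϑ_{t:w}(f,h)(x) = Σ_{s=t}^{t+w} f_s(x_s)·1{f_s(x_s) ≥ h_s(x_s)}·Π_{r=t}^{s−1} 1{f_r(x_r) < h_r(x_r)}
  + h_{t+w}(x_{t+w})·Π_{r=t}^{t+w} 1{f_r(x_r) < h_r(x_r)}`. -/
noncomputable def cashflow {m : ℕ} (f h : ℕ → (Fin m → ℝ) → ℝ) (t w : ℕ)
    (x : ℕ → Fin m → ℝ) : ℝ :=
  (∑ s ∈ Finset.range (w + 1),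
      f (t + s) (x (t + s)) * (if h (t + s) (x (t + s)) ≤ f (t + s) (x (t + s)) then 1 else 0) *
        ∏ r ∈ Finset.range s, (if f (t + r) (x (t + r)) < h (t + r) (x (t + r)) then 1 else 0))
    + h (t + w) (x (t + w)) *
        ∏ r ∈ Finset.range (w + 1), (if f (t + r) (x (t + r)) < h (t + r) (x (t + r)) then 1 else 0)

/-- The σ-algebra `σ(X_0, …, X_t)` generated by the process up to time `t`. -/
def pastSigma {m : ℕ} {Ω : Type*} [MeasurableSpace Ω] (X : ℕ → Ω → Fin m → ℝ) (t : ℕ) :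
    MeasurableSpace Ω :=
  ⨆ s : Fin (t + 1), MeasurableSpace.comap (X (s : ℕ)) inferInstance

/-- `X_0, …, X_T` is a Markov chain: for every `t < T` and every bounded Borel function `g`
of the future coordinates `X_{t+1}, …, X_T`,
`E[g(X_{t+1},…,X_T) | σ(X_0,…,X_t)] = E[g(X_{t+1},…,X_T) | σ(X_t)]` a.s. -/
def IsMarkov {m : ℕ} {Ω : Type*} [MeasurableSpace Ω] (P : Measure Ω)
    (X : ℕ → Ω → Fin m → ℝ) (T : ℕ) : Prop :=
  ∀ t, t < T → ∀ g : (Fin (T - t) → Fin m → ℝ) → ℝ, Measurable g → (∃ C, ∀ y, |g y| ≤ C) →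
    P[(fun ω => g fun j => X (t + 1 + (j : ℕ)) ω)|pastSigma X t]
      =ᵐ[P] P[(fun ω => g fun j => X (t + 1 + (j : ℕ)) ω)|MeasurableSpace.comap (X t) inferInstance]

/-- `q = (q_0, …, q_T)` are the continuation values of the payoff `f`: the `q_t` are Borel,
`q_T = f_T`, and `q_t(X_t) = E[max(f_{t+1}(X_{t+1}), q_{t+1}(X_{t+1})) | σ(X_t)]` a.s. for
`t < T`. -/
def IsContinuation {m : ℕ} {Ω : Type*} [MeasurableSpace Ω] (P : Measure Ω)
    (X : ℕ → Ω → Fin m → ℝ) (T : ℕ) (f q : ℕ → (Fin m → ℝ) → ℝ) : Prop :=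
  (∀ t, t ≤ T → Measurable (q t)) ∧ q T = f T ∧
    ∀ t, t < T →
      (fun ω => q t (X t ω)) =ᵐ[P]
        P[(fun ω => max (f (t + 1) (X (t + 1) ω)) (q (t + 1) (X (t + 1) ω)))|
          MeasurableSpace.comap (X t) inferInstance]

namespace MeasureTheory

variable {α E : Type*} {m₁ m₂ m₀ : MeasurableSpace α} {μ : Measure α} [IsFiniteMeasure μ]

theorem condExp_ae_eq_condExp_of_tendsto [NormedAddCommGroup E] [NormedSpace ℝ E]
    [CompleteSpace E] (hm₁₂ : m₁ ≤ m₂) (hm₂ : m₂ ≤ m₀)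
    {fs : ℕ → α → E} {f : α → E} (bound : α → ℝ)
    (hfs_meas : ∀ n, AEStronglyMeasurable (fs n) μ) (h_int_bound : Integrable bound μ)
    (hfs_bound : ∀ n, ∀ᵐ x ∂μ, ‖fs n x‖ ≤ bound x)
    (hfs : ∀ᵐ x ∂μ, Tendsto (fun n => fs n x) atTop (nhds (f x)))
    (hfs_eq : ∀ n, μ[fs n|m₂] =ᵐ[μ] μ[fs n|m₁]) :
    μ[f|m₂] =ᵐ[μ] μ[f|m₁] := by
  have hL1 : AEStronglyMeasurable[m₁] (condExpL1 hm₂ μ f) μ :=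
    (isClosed_aestronglyMeasurable (hm₁₂.trans hm₂)).mem_of_tendsto
      (tendsto_condExpL1_of_dominated_convergence hm₂ bound hfs_meas h_int_bound hfs_bound hfs)
      (Eventually.of_forall fun n => stronglyMeasurable_condExp.aestronglyMeasurable.congr
        ((hfs_eq n).symm.trans (condExp_ae_eq_condExpL1 hm₂ _)))
  have hmeas : AEStronglyMeasurable[m₁] (μ[f|m₂]) μ :=
    hL1.congr (condExp_ae_eq_condExpL1 hm₂ f).symm
  exact (condExp_of_aestronglyMeasurable' (hm₁₂.trans hm₂) hmeas integrable_condExp).symm.trans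
    (condExp_condExp_of_le hm₁₂ hm₂)

theorem condExp_mul_sub_ae_eq_zero (hm₁₂ : m₁ ≤ m₂) (hm₂ : m₂ ≤ m₀) {Z M Q : α → ℝ} {C : ℝ}
    (hZ : StronglyMeasurable[m₂] Z) (hZC : ∀ x, ‖Z x‖ ≤ C) (hM : Integrable M μ)
    (hQ : StronglyMeasurable[m₂] Q) (hQint : Integrable Q μ) (hMQ : μ[M|m₂] =ᵐ[μ] Q) :
    μ[Z * (M - Q)|m₁] =ᵐ[μ] 0 := by
  have hZMQ : Integrable (Z * (M - Q)) μ :=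
    (hM.sub hQint).bdd_mul (hZ.mono hm₂).aestronglyMeasurable (ae_of_all _ hZC)
  have h₂ : μ[Z * (M - Q)|m₂] =ᵐ[μ] 0 := by
    filter_upwards [condExp_mul_of_stronglyMeasurable_left hZ hZMQ (hM.sub hQint),
      condExp_sub hM hQint m₂, hMQ] with x hZx hsub hMx
    rw [hZx, Pi.mul_apply, hsub, Pi.sub_apply, hMx,
      condExp_of_stronglyMeasurable hm₂ hQ hQint, sub_self, mul_zero, Pi.zero_apply]
  calc μ[Z * (M - Q)|m₁]
      =ᵐ[μ] μ[μ[Z * (M - Q)|m₂]|m₁] := (condExp_condExp_of_le hm₁₂ hm₂).symm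
    _ =ᵐ[μ] μ[(0 : α → ℝ)|m₁] := condExp_congr_ae h₂
    _ = 0 := condExp_zero

end MeasureTheory

namespace ProbabilityTheory

theorem tendsto_truncation {α : Type*} (f : α → ℝ) (x : α) :
    Tendsto (fun n : ℕ => truncation f n x) atTop (nhds (f x)) :=
  tendsto_const_nhds.congr' <| (tendsto_natCast_atTop_atTop.eventually_gt_atTop |f x|).mono
    fun _ hn => (truncation_eq_self hn).symm

theorem _root_.Measurable.truncation {α : Type*} [MeasurableSpace α] {f : α → ℝ}
    (hf : Measurable f) (A : ℝ) : Measurable (truncation f A) :=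
  (measurable_id.indicator measurableSet_Ioc).comp hf

end ProbabilityTheory

section Cashflow

variable {m : ℕ}

noncomputable def continuationIndicator (f h : ℕ → (Fin m → ℝ) → ℝ) (t w : ℕ)
    (x : ℕ → Fin m → ℝ) : ℝ :=
  ∏ r ∈ Finset.range (w + 1), if f (t + r) (x (t + r)) < h (t + r) (x (t + r)) then 1 else 0

theorem norm_continuationIndicator_le_one (f h : ℕ → (Fin m → ℝ) → ℝ) (t w : ℕ)
    (x : ℕ → Fin m → ℝ) : ‖continuationIndicator f h t w x‖ ≤ 1 := by
  rw [continuationIndicator, Finset.prod_boole]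
  split_ifs <;> simp

theorem measurable_continuationIndicator {Ω : Type*} {mΩ : MeasurableSpace Ω}
    {X : ℕ → Ω → Fin m → ℝ} {f h : ℕ → (Fin m → ℝ) → ℝ} {t w : ℕ}
    (hf : ∀ r ≤ w, Measurable (f (t + r))) (hh : ∀ r ≤ w, Measurable (h (t + r)))
    (hX : ∀ r ≤ w, Measurable (X (t + r))) :
    Measurable fun ω => continuationIndicator f h t w fun u => X u ω := by
  refine Finset.measurable_prod _ fun r hr => Measurable.ite ?_ measurable_const measurable_const
  have hr : r ≤ w := Nat.lt_succ_iff.mp (Finset.mem_range.mp hr)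
  exact measurableSet_lt ((hf r hr).comp (hX r hr)) ((hh r hr).comp (hX r hr))

theorem cashflow_zero (f h : ℕ → (Fin m → ℝ) → ℝ) (t : ℕ) (x : ℕ → Fin m → ℝ) :
    cashflow f h t 0 x = max (f t (x t)) (h t (x t)) := by
  simp only [cashflow, zero_add, Finset.sum_range_one, Finset.prod_range_zero,
    Finset.prod_range_one, mul_one, Nat.add_zero]
  rcases le_or_gt (h t (x t)) (f t (x t)) with hc | hc
  · rw [if_pos hc, if_neg hc.not_gt, max_eq_left hc]; ring
  · rw [if_neg hc.not_ge, if_pos hc, max_eq_right hc.le]; ring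

theorem cashflow_succ (f h : ℕ → (Fin m → ℝ) → ℝ) (t w : ℕ) (x : ℕ → Fin m → ℝ) :
    cashflow f h t (w + 1) x = cashflow f h t w x + continuationIndicator f h t w x *
      (max (f (t + w + 1) (x (t + w + 1))) (h (t + w + 1) (x (t + w + 1))) -
        h (t + w) (x (t + w))) := by
  simp only [cashflow, continuationIndicator, Finset.sum_range_succ, Finset.prod_range_succ,
    ← Nat.add_assoc]
  rcases le_or_gt (h (t + w + 1) (x (t + w + 1))) (f (t + w + 1) (x (t + w + 1))) with hc | hc
  · rw [if_pos hc, if_neg hc.not_gt, max_eq_left hc]; ring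
  · rw [if_neg hc.not_ge, if_pos hc, max_eq_right hc.le]; ring

end Cashflow

section Chain

variable {m T : ℕ} {Ω : Type*} {mΩ : MeasurableSpace Ω} {P : Measure Ω}
  {X : ℕ → Ω → Fin m → ℝ}

theorem pastSigma_le (hX : ∀ t, Measurable (X t)) (t : ℕ) : pastSigma X t ≤ mΩ :=
  iSup_le fun _ => (hX _).comap_le

theorem comap_le_pastSigma {s t : ℕ} (hst : s ≤ t) :
    MeasurableSpace.comap (X s) inferInstance ≤ pastSigma X t :=
  le_iSup_of_le (⟨s, Nat.lt_succ_of_le hst⟩ : Fin (t + 1)) le_rfl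

theorem measurable_pastSigma {s t : ℕ} (hst : s ≤ t) : Measurable[pastSigma X t] (X s) :=
  (comap_measurable (X s)).mono (comap_le_pastSigma hst) le_rfl

theorem IsMarkov.condExp_pastSigma_ae_eq [IsFiniteMeasure P] (hX : ∀ t, Measurable (X t))
    (hM : IsMarkov P X T) {t : ℕ} (ht : t < T) {g : (Fin (T - t) → Fin m → ℝ) → ℝ}
    (hg : Measurable g) (hint : Integrable (fun ω => g fun j => X (t + 1 + (j : ℕ)) ω) P) :
    P[(fun ω => g fun j => X (t + 1 + (j : ℕ)) ω)|pastSigma X t]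
      =ᵐ[P] P[(fun ω => g fun j => X (t + 1 + (j : ℕ)) ω)|
        MeasurableSpace.comap (X t) inferInstance] := by
  have hfuture : Measurable fun ω (j : Fin (T - t)) => X (t + 1 + (j : ℕ)) ω :=
    measurable_pi_lambda _ fun _ => hX _
  refine condExp_ae_eq_condExp_of_tendsto (comap_le_pastSigma le_rfl) (pastSigma_le hX t)
    (fs := fun (n : ℕ) ω => ProbabilityTheory.truncation g n fun j => X (t + 1 + (j : ℕ)) ω)
    (fun ω => |g fun j => X (t + 1 + (j : ℕ)) ω|)
    (fun n => ((hg.truncation n).comp hfuture).aestronglyMeasurable) hint.abs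
    (fun n => ae_of_all _ fun ω => ProbabilityTheory.abs_truncation_le_abs_self g n _)
    (ae_of_all _ fun ω => ProbabilityTheory.tendsto_truncation g _) fun n => ?_
  exact hM t ht _ (hg.truncation n) ⟨|(n : ℝ)|, ProbabilityTheory.abs_truncation_le_bound g n⟩

theorem IsContinuation.condExp_max_pastSigma_ae_eq [IsFiniteMeasure P]
    (hX : ∀ t, Measurable (X t)) (hM : IsMarkov P X T) {f q : ℕ → (Fin m → ℝ) → ℝ}
    (hq : IsContinuation P X T f q) (hfmeas : ∀ t, t ≤ T → Measurable (f t))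
    (hfint : ∀ t, t ≤ T → Integrable (fun ω => f t (X t ω)) P)
    (hqint : ∀ t, t ≤ T → Integrable (fun ω => q t (X t ω)) P) {t : ℕ} (ht : t < T) :
    P[(fun ω => max (f (t + 1) (X (t + 1) ω)) (q (t + 1) (X (t + 1) ω)))|pastSigma X t]
      =ᵐ[P] fun ω => q t (X t ω) :=
  (hM.condExp_pastSigma_ae_eq hX ht
    (g := fun y => max (f (t + 1) (y ⟨0, Nat.sub_pos_of_lt ht⟩))
      (q (t + 1) (y ⟨0, Nat.sub_pos_of_lt ht⟩)))
    (((hfmeas _ ht).max (hq.1 _ ht)).comp (measurable_pi_apply _))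
    ((hfint _ ht).sup (hqint _ ht))).trans (hq.2.2 t ht).symm

theorem integrable_cashflow (hX : ∀ t, Measurable (X t)) {f q : ℕ → (Fin m → ℝ) → ℝ}
    (hfmeas : ∀ t, t ≤ T → Measurable (f t)) (hqmeas : ∀ t, t ≤ T → Measurable (q t))
    (hfint : ∀ t, t ≤ T → Integrable (fun ω => f t (X t ω)) P)
    (hqint : ∀ t, t ≤ T → Integrable (fun ω => q t (X t ω)) P) {t w : ℕ} (htw : t + w ≤ T) :
    Integrable (fun ω => cashflow f q t w fun s => X s ω) P := by
  induction w with
  | zero =>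
    simp only [cashflow_zero]
    exact (hfint t htw).sup (hqint t htw)
  | succ w ih =>
    simp only [cashflow_succ]
    refine (ih (by omega)).add (Integrable.bdd_mul ?_ ?_
      (ae_of_all _ fun ω => norm_continuationIndicator_le_one f q t w _))
    · exact ((hfint _ htw).sup (hqint _ htw)).sub (hqint _ (by omega))
    · exact (measurable_continuationIndicator (fun _ _ => hfmeas _ (by omega))
        (fun _ _ => hqmeas _ (by omega)) fun _ _ => hX _).aestronglyMeasurable

theorem IsContinuation.condExp_cashflow_succ_ae_eq [IsFiniteMeasure P]
    (hX : ∀ t, Measurable (X t)) (hM : IsMarkov P X T) {f q : ℕ → (Fin m → ℝ) → ℝ}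
    (hq : IsContinuation P X T f q) (hfmeas : ∀ t, t ≤ T → Measurable (f t))
    (hfint : ∀ t, t ≤ T → Integrable (fun ω => f t (X t ω)) P)
    (hqint : ∀ t, t ≤ T → Integrable (fun ω => q t (X t ω)) P) {r t w : ℕ} (hr : r ≤ t + w)
    (hT : t + w < T) :
    P[(fun ω => cashflow f q t (w + 1) fun s => X s ω)|MeasurableSpace.comap (X r) inferInstance]
      =ᵐ[P] P[(fun ω => cashflow f q t w fun s => X s ω)|
        MeasurableSpace.comap (X r) inferInstance] := by
  set s := t + w
  have hincrement : (fun ω => cashflow f q t (w + 1) fun u => X u ω) -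
      (fun ω => cashflow f q t w fun u => X u ω) =
      (fun ω => continuationIndicator f q t w (fun u => X u ω)) *
        ((fun ω => max (f (s + 1) (X (s + 1) ω)) (q (s + 1) (X (s + 1) ω))) -
          fun ω => q s (X s ω)) := by
    funext ω
    simp only [Pi.sub_apply, Pi.mul_apply, cashflow_succ, add_sub_cancel_left]
    rfl
  have hzero := condExp_mul_sub_ae_eq_zero (comap_le_pastSigma hr) (pastSigma_le hX s)
    (measurable_continuationIndicator (fun _ _ => hfmeas _ (by omega))
      (fun _ _ => hq.1 _ (by omega)) fun _ _ => measurable_pastSigma (by omega)).stronglyMeasurable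
    (norm_continuationIndicator_le_one f q t w <| fun u => X u ·)
    ((hfint _ hT).sup (hqint _ hT))
    ((hq.1 s hT.le).comp (measurable_pastSigma le_rfl)).stronglyMeasurable (hqint s hT.le)
    (hq.condExp_max_pastSigma_ae_eq hX hM hfmeas hfint hqint hT)
  filter_upwards [hincrement ▸ hzero,
    condExp_sub (integrable_cashflow hX hfmeas hq.1 hfint hqint (by omega : t + (w + 1) ≤ T))
      (integrable_cashflow hX hfmeas hq.1 hfint hqint hT.le) _] with ω hdiff hsub
  rw [hdiff, Pi.zero_apply, Pi.sub_apply] at hsub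
  linarith

end Chain

theorem continuation_value_cashflow_representation_general
    {m T : ℕ}
    {Ω : Type*} [MeasurableSpace Ω] (P : Measure Ω) [IsProbabilityMeasure P]
    (X : ℕ → Ω → Fin m → ℝ) (hX : ∀ t, Measurable (X t)) (hMarkov : IsMarkov P X T)
    (f : ℕ → (Fin m → ℝ) → ℝ) (hfmeas : ∀ t, t ≤ T → Measurable (f t))
    (hfint : ∀ t, t ≤ T → Integrable (fun ω => f t (X t ω)) P)
    (q : ℕ → (Fin m → ℝ) → ℝ) (hq : IsContinuation P X T f q)
    (hqint : ∀ t, t ≤ T → Integrable (fun ω => q t (X t ω)) P) :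
    ∀ t, t < T → ∀ w, t + w + 1 ≤ T →
      (fun ω => q t (X t ω)) =ᵐ[P]
        P[(fun ω => cashflow f q (t + 1) w (fun s => X s ω))|
          MeasurableSpace.comap (X t) inferInstance] := by
  intro t ht w hw
  induction w with
  | zero => simpa only [cashflow_zero] using hq.2.2 t ht
  | succ w ih =>
    exact (ih (by omega)).trans (hq.condExp_cashflow_succ_ae_eq hX hMarkov hfmeas hfint hqint
      (by omega) (by omega)).symm

/-- **Representation of the continuation value via cash flows** (equation (3.19)).
For every `t < T` and `0 ≤ w ≤ T−t−1`,
`q_t(X_t) = E[ϑ_{t+1:w}(f,q)(X_0,…,X_T) | σ(X_t)]` `P`-a.s. -/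
theorem continuation_value_cashflow_representation
    {m T : ℕ} (hT : 1 ≤ T)
    {Ω : Type*} [MeasurableSpace Ω] (P : Measure Ω) [IsProbabilityMeasure P]
    (X : ℕ → Ω → Fin m → ℝ) (hX : ∀ t, Measurable (X t)) (hMarkov : IsMarkov P X T)
    (f : ℕ → (Fin m → ℝ) → ℝ) (hfmeas : ∀ t, t ≤ T → Measurable (f t))
    (hfnn : ∀ t x, 0 ≤ f t x)
    (hfint : ∀ t, t ≤ T → Integrable (fun ω => f t (X t ω)) P)
    (q : ℕ → (Fin m → ℝ) → ℝ) (hq : IsContinuation P X T f q)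
    (hqint : ∀ t, t ≤ T → Integrable (fun ω => q t (X t ω)) P) :
    ∀ t, t < T → ∀ w, t + w + 1 ≤ T →
      (fun ω => q t (X t ω)) =ᵐ[P]
        P[(fun ω => cashflow f q (t + 1) w (fun s => X s ω))|
          MeasurableSpace.comap (X t) inferInstance] :=
  continuation_value_cashflow_representation_general P X hX hMarkov f hfmeas hfint q hq hqint
end

section
/- VC-dimension of the cash flow class (Proposition 5.6): Fix t, T with t < T, w with 0 ≤ w ≤ T−t−1, and let f_{t+1},…,f_{t+w+1} be nonnegative real-valued functions on ℝ^m. For s = t+1,…,t+w+1 let 𝓗_s be a class of real-valued functions on ℝ^m with VC-dimension vc(𝓗_s) ≤ d, where d ≥ 1. Consider the cash flow class 𝓖_t = { ϑ_{t+1:w}(f,h) : h_s ∈ 𝓗_s for s = t+1,…,t+w+1 } of functions on (ℝ^m)^{T+1}. Then 𝓖_t is a VC-class and vc(𝓖_t) ≤ c(w)·d, where c(w) = 2(w+2)·log₂(e(w+2)). -/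
open MeasureTheory Filter

/-- Extension of a finite path `x ∈ (ℝ^m)^{T+1}` to an `ℕ`-indexed path (by `0` beyond `T`). -/
def pathExt {m T : ℕ} (x : Fin (T + 1) → Fin m → ℝ) : ℕ → Fin m → ℝ :=
  fun s => if hs : s < T + 1 then x ⟨s, hs⟩ else 0

/-- A class of real-valued functions `𝓖` shatters the points `x 0, …, x (n-1)` if there are
thresholds `r i` such that every boolean pattern of `g (x i) > r i` vs `g (x i) ≤ r i` is
realized by some `g ∈ 𝓖`. -/
def Shatters {S : Type*} (𝓖 : Set (S → ℝ)) {n : ℕ} (x : Fin n → S) : Prop :=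
  ∃ r : Fin n → ℝ, ∀ b : Fin n → Bool, ∃ g ∈ 𝓖, ∀ i,
    (b i = true → r i < g (x i)) ∧ (b i = false → g (x i) ≤ r i)

/-- The VC-dimension (pseudo-dimension) of a class of real-valued functions is at most `d`. -/
def VCDimLE {S : Type*} (𝓖 : Set (S → ℝ)) (d : ℝ) : Prop :=
  ∀ n : ℕ, ∀ x : Fin n → S, Shatters 𝓖 x → (n : ℝ) ≤ d

/-! Let `n` points be shattered by the cash flow class with thresholds `r`. Whether
`r i < ϑ(f,h)(x_i)` only depends on which of the comparisons `f_s(x_{i,s}) < h_s(x_{i,s})`, at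
the stages before the last, and `max (f_s(x_{i,s})) (r i) < h_s(x_{i,s})`, at the last stage, hold.
At each of the `w + 1` stages these comparison patterns are traces of a class of VC-dimension at
most `d`, so by the Sauer–Shelah lemma there are at most `∑_{k ≤ d} C(n,k) ≤ (e n / d)^d` of them.
Hence `2^n ≤ (e n / d)^(d (w + 1))`, and solving this inequality for `n` gives the bound. -/

open Finset Real

lemma shatters_iff {S : Type*} {𝓖 : Set (S → ℝ)} {n : ℕ} {x : Fin n → S} :
    Shatters 𝓖 x ↔
      ∃ r : Fin n → ℝ, ∀ b : Fin n → Bool, ∃ g ∈ 𝓖, ∀ i, (r i < g (x i) ↔ b i = true) := by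
  refine exists_congr fun r => forall_congr' fun b => exists_congr fun g => and_congr_right
    fun _ => forall_congr' fun i => ?_
  cases b i <;> simp

open Classical in
noncomputable def traces {S : Type*} (𝓖 : Set (S → ℝ)) {n : ℕ} (x : Fin n → S)
    (r : Fin n → ℝ) : Finset (Finset (Fin n)) :=
  {A | ∃ g ∈ 𝓖, A = ({i | r i < g (x i)} : Finset (Fin n))}

lemma mem_traces {S : Type*} {𝓖 : Set (S → ℝ)} {n : ℕ} {x : Fin n → S} {r : Fin n → ℝ}
    {A : Finset (Fin n)} :
    A ∈ traces 𝓖 x r ↔ ∃ g ∈ 𝓖, A = ({i | r i < g (x i)} : Finset (Fin n)) := by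
  simp [traces]

lemma vcDim_traces_le {S : Type*} {𝓖 : Set (S → ℝ)} {d : ℕ} (h𝓖 : VCDimLE 𝓖 d) {n : ℕ}
    (x : Fin n → S) (r : Fin n → ℝ) : (traces 𝓖 x r).vcDim ≤ d := by
  classical
  refine Finset.sup_le fun A hA => ?_
  let e := A.orderEmbOfFin rfl
  suffices Shatters 𝓖 (x ∘ e) by exact_mod_cast h𝓖 _ _ this
  refine shatters_iff.2 ⟨r ∘ e, fun b => ?_⟩
  obtain ⟨T, hT, hAT⟩ := mem_shatterer.1 hA (t := ({j | b j = true} : Finset _).map e.toEmbedding)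
    (by simp [subset_iff, e, A.orderEmbOfFin_mem])
  obtain ⟨g, hg, rfl⟩ := mem_traces.1 hT
  refine ⟨g, hg, fun j => ?_⟩
  have := congrArg (e j ∈ ·) hAT
  simpa [A.orderEmbOfFin_mem, e] using this

lemma card_traces_le {S : Type*} {𝓖 : Set (S → ℝ)} {d : ℕ} (h𝓖 : VCDimLE 𝓖 d) {n : ℕ}
    (x : Fin n → S) (r : Fin n → ℝ) : #(traces 𝓖 x r) ≤ ∑ k ∈ Iic d, n.choose k :=
  calc #(traces 𝓖 x r) ≤ #(traces 𝓖 x r).shatterer := card_le_card_shatterer _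
    _ ≤ ∑ k ∈ Iic (traces 𝓖 x r).vcDim, (Fintype.card (Fin n)).choose k :=
      card_shatterer_le_sum_vcDim
    _ ≤ ∑ k ∈ Iic d, n.choose k := by
      rw [Fintype.card_fin]
      exact sum_le_sum_of_subset (Iic_subset_Iic.2 (vcDim_traces_le h𝓖 x r))

lemma lt_ite_lt_iff {a b ρ : ℝ} : (ρ < if a < b then b else a) ↔ ρ < a ∨ max a ρ < b := by
  rw [max_lt_iff]
  split_ifs <;> grind

section Cashflow

variable {m : ℕ} (f h : ℕ → (Fin m → ℝ) → ℝ) (u : ℕ) (z : ℕ → Fin m → ℝ)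

lemma cashflow_zero_s11 :
    cashflow f h u 0 z = if f u (z u) < h u (z u) then h u (z u) else f u (z u) := by
  by_cases hc : f u (z u) < h u (z u) <;> simp [cashflow, hc, not_lt.1]

lemma cashflow_succ_s11 (w : ℕ) :
    cashflow f h u (w + 1) z =
      if f u (z u) < h u (z u) then cashflow f h (u + 1) w z else f u (z u) := by
  unfold cashflow
  simp only [sum_range_succ' _ (w + 1), prod_range_succ', add_zero, prod_range_zero,
    ← add_assoc, add_right_comm u _ 1]
  by_cases hc : f u (z u) < h u (z u)
  · simp [hc, not_le.2 hc]
  · simp [hc, not_lt.1 hc]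

end Cashflow

lemma lt_cashflow_congr {m : ℕ} {f h h' : ℕ → (Fin m → ℝ) → ℝ} {z : ℕ → Fin m → ℝ} {ρ : ℝ}
    {w u : ℕ}
    (hstop : ∀ s < w,
      (f (u + s) (z (u + s)) < h (u + s) (z (u + s)) ↔
        f (u + s) (z (u + s)) < h' (u + s) (z (u + s))))
    (hlast : max (f (u + w) (z (u + w))) ρ < h (u + w) (z (u + w)) ↔
      max (f (u + w) (z (u + w))) ρ < h' (u + w) (z (u + w))) :
    ρ < cashflow f h u w z ↔ ρ < cashflow f h' u w z := by
  induction w generalizing u with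
  | zero =>
    rw [add_zero] at hlast
    simp only [cashflow_zero_s11, lt_ite_lt_iff, hlast]
  | succ w ih =>
    have hshift : ∀ s, u + 1 + s = u + (s + 1) := fun s => by omega
    have hstop₀ := hstop 0 w.succ_pos
    simp only [add_zero] at hstop₀
    rw [cashflow_succ_s11, cashflow_succ_s11]
    by_cases hc : f u (z u) < h u (z u)
    · rw [if_pos hc, if_pos (hstop₀.1 hc)]
      refine ih (fun s hs => ?_) ?_
      · simpa only [hshift] using hstop (s + 1) (by omega)
      · simpa only [hshift] using hlast
    · rw [if_neg hc, if_neg (mt hstop₀.2 hc)]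

def cashflowClass {m : ℕ} (T t w : ℕ) (f : ℕ → (Fin m → ℝ) → ℝ)
    (𝓗 : ℕ → Set ((Fin m → ℝ) → ℝ)) : Set ((Fin (T + 1) → Fin m → ℝ) → ℝ) :=
  {g | ∃ h : ℕ → (Fin m → ℝ) → ℝ, (∀ s, t + 1 ≤ s → s ≤ t + w + 1 → h s ∈ 𝓗 s) ∧
    g = fun x => cashflow f h (t + 1) w (pathExt x)}

lemma two_pow_le_of_shatters_cashflowClass {m T : ℕ} {t w : ℕ} {f : ℕ → (Fin m → ℝ) → ℝ}
    {𝓗 : ℕ → Set ((Fin m → ℝ) → ℝ)} {d : ℕ}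
    (h𝓗 : ∀ s, t + 1 ≤ s → s ≤ t + w + 1 → VCDimLE (𝓗 s) d) {n : ℕ}
    {x : Fin n → Fin (T + 1) → Fin m → ℝ} (hx : Shatters (cashflowClass T t w f 𝓗) x) :
    2 ^ n ≤ (∑ k ∈ Iic d, n.choose k) ^ (w + 1) := by
  classical
  obtain ⟨r, hr⟩ := shatters_iff.1 hx
  choose g hg hgr using hr
  choose H hH hgH using hg
  let y (s : Fin (w + 1)) (i : Fin n) := pathExt (x i) (t + 1 + s)
  let θ (s : Fin (w + 1)) (i : Fin n) : ℝ :=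
    if (s : ℕ) < w then f (t + 1 + s) (y s i) else max (f (t + 1 + s) (y s i)) (r i)
  let Φ (b : Fin n → Bool) (s : Fin (w + 1)) : Finset (Fin n) :=
    {i | θ s i < H b (t + 1 + s) (y s i)}
  have hΦ : ∀ b (s : Fin (w + 1)), Φ b s ∈ traces (𝓗 (t + 1 + s)) (y s) (θ s) := fun b s =>
    mem_traces.2 ⟨_, hH b _ (by omega) (by have := s.is_le; omega), rfl⟩
  have hΦinj : Function.Injective Φ := by
    intro b b' hbb
    funext i
    have hmem : ∀ s, θ s i < H b (t + 1 + s) (y s i) ↔ θ s i < H b' (t + 1 + s) (y s i) :=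
      fun s => by simpa [Φ] using congrArg (i ∈ ·) (congrFun hbb s)
    have hcongr : r i < g b (x i) ↔ r i < g b' (x i) := by
      rw [hgH b, hgH b']
      refine lt_cashflow_congr (fun s hs => ?_) ?_
      · simpa [θ, y, hs] using hmem ⟨s, by omega⟩
      · simpa [θ, y] using hmem (Fin.last w)
    rw [hgr b i, hgr b' i] at hcongr
    exact Bool.eq_iff_iff.2 hcongr
  calc 2 ^ n = #(univ : Finset (Fin n → Bool)) := by simp
    _ ≤ #(Fintype.piFinset fun s : Fin (w + 1) => traces (𝓗 (t + 1 + s)) (y s) (θ s)) :=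
      card_le_card_of_injOn Φ (fun b _ => Fintype.mem_piFinset.2 (hΦ b)) hΦinj.injOn
    _ = ∏ s : Fin (w + 1), #(traces (𝓗 (t + 1 + s)) (y s) (θ s)) := Fintype.card_piFinset _
    _ ≤ ∏ _s : Fin (w + 1), ∑ k ∈ Iic d, n.choose k :=
      prod_le_prod' fun s _ => card_traces_le (h𝓗 _ (by omega) (by have := s.is_le; omega)) _ _
    _ = _ := by simp

lemma sum_choose_le_exp_mul_div_pow {n d : ℕ} (hd : 0 < d) (hdn : d ≤ n) :
    (∑ k ∈ Iic d, n.choose k : ℝ) ≤ (exp 1 * n / d) ^ d := by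
  have hn : (0 : ℝ) < n := by exact_mod_cast hd.trans_le hdn
  set q : ℝ := d / n with hq
  have hq0 : 0 < q := by positivity
  have hq1 : q ≤ 1 := div_le_one_of_le₀ (by exact_mod_cast hdn) hn.le
  have key : (∑ k ∈ Iic d, (n.choose k : ℝ)) * q ^ d ≤ exp 1 ^ d :=
    calc (∑ k ∈ Iic d, (n.choose k : ℝ)) * q ^ d
        ≤ ∑ k ∈ Iic d, q ^ k * n.choose k := by
          rw [sum_mul]
          refine sum_le_sum fun k hk => ?_
          rw [mul_comm]
          exact mul_le_mul_of_nonneg_right (pow_le_pow_of_le_one hq0.le hq1 (mem_Iic.1 hk))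
            (by positivity)
      _ ≤ ∑ k ∈ range (n + 1), q ^ k * n.choose k :=
          sum_le_sum_of_subset_of_nonneg (fun k hk => by simp at hk ⊢; omega)
            fun _ _ _ => by positivity
      _ = (q + 1) ^ n := by simp [add_pow]
      _ ≤ exp q ^ n := by gcongr; exact add_one_le_exp q
      _ = exp 1 ^ d := by rw [← exp_nat_mul, ← exp_nat_mul, hq]; field_simp
  calc (∑ k ∈ Iic d, (n.choose k : ℝ)) ≤ exp 1 ^ d / q ^ d := by
        rwa [le_div_iff₀ (by positivity)]
    _ = (exp 1 * n / d) ^ d := by rw [hq, ← div_pow]; congr 1; field_simp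

lemma le_two_mul_of_le_add_logb {L u : ℝ} (hL : logb 2 (2 * exp 1) ≤ L) (hu : 0 < u)
    (h : u ≤ L + logb 2 u) : u ≤ 2 * L := by
  have hlog2_gt := log_two_gt_d9
  have hlog2_lt := log_two_lt_d9
  have he_gt := exp_one_gt_d9
  have hLlog : log 2 + 1 ≤ L * log 2 := by
    rwa [logb, log_mul two_ne_zero (exp_ne_zero 1), log_exp, div_le_iff₀ (by positivity)] at hL
  have hL0 : 0 < L := by nlinarith
  -- `2 L ≤ 2 ^ L`, via `log L ≤ L / e`
  have hlog2L : log (2 * L) ≤ L * log 2 := by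
    have := log_le_sub_one_of_pos (show 0 < L / exp 1 by positivity)
    rw [log_div hL0.ne' (exp_ne_zero 1), log_exp, div_eq_mul_inv] at this
    rw [log_mul two_ne_zero hL0.ne']
    nlinarith [mul_inv_cancel₀ (exp_ne_zero 1), inv_pos.2 (exp_pos 1)]
  -- the tangent line of `log` at `2 L`
  have htangent : log u ≤ log (2 * L) + u / (2 * L) - 1 := by
    have := log_le_sub_one_of_pos (show 0 < u / (2 * L) by positivity)
    rw [log_div hu.ne' (by positivity)] at this
    linarith
  have hlogu : (u - L) * log 2 ≤ log u := by
    rw [logb, ← sub_le_iff_le_add', le_div_iff₀ (by positivity)] at h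
    exact h
  -- combining the two bounds on `log u` gives `(u - 2 L) (2 L log 2 - 1) ≤ 0`
  have : u * (2 * L * log 2 - 1) ≤ 2 * L * (2 * L * log 2 - 1) := by
    have := mul_div_cancel₀ u (show 2 * L ≠ 0 by positivity)
    nlinarith
  exact le_of_mul_le_mul_right this (by nlinarith)

lemma le_of_le_mul_logb {x d c : ℝ} (hx : 0 < x) (hd : 0 < d) (hc : 2 ≤ c)
    (h : x ≤ (c - 1) * d * logb 2 (exp 1 * x / d)) :
    x ≤ 2 * c * logb 2 (exp 1 * c) * d := by
  set L := logb 2 (exp 1 * c)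
  set u := x / (c * d) with hu_def
  have hu : 0 < u := by positivity
  have hlog_pos : 0 < logb 2 (exp 1 * x / d) := by
    by_contra! hle
    nlinarith [mul_nonneg (mul_nonneg (by linarith : (0 : ℝ) ≤ c - 1) hd.le) (neg_nonneg.2 hle)]
  have hsplit : logb 2 (exp 1 * x / d) = L + logb 2 u := by
    rw [← logb_mul (by positivity) hu.ne']
    congr 1
    rw [hu_def]
    field_simp
  have hu_le : u ≤ L + logb 2 u := by
    rw [← hsplit, div_le_iff₀ (by positivity)]
    nlinarith
  have hL : logb 2 (2 * exp 1) ≤ L :=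
    logb_le_logb_of_le one_lt_two (by positivity) (by nlinarith [exp_pos 1])
  have hx_eq : x = u * (c * d) := by rw [hu_def, div_mul_cancel₀ _ (by positivity)]
  rw [hx_eq]
  nlinarith [le_two_mul_of_le_add_logb hL hu hu_le, mul_pos (by linarith : (0 : ℝ) < c) hd]

lemma le_of_two_pow_le_sum_choose_pow {n d w : ℕ}
    (h : 2 ^ n ≤ (∑ k ∈ Iic d, n.choose k) ^ (w + 1)) :
    (n : ℝ) ≤ 2 * (w + 2) * logb 2 (exp 1 * (w + 2)) * d := by
  have hL : 1 ≤ logb 2 (exp 1 * (w + 2)) := by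
    rw [le_logb_iff_rpow_le one_lt_two (by positivity), rpow_one]
    nlinarith [add_one_le_exp 1, (Nat.cast_nonneg w : (0 : ℝ) ≤ w)]
  rcases le_or_gt n d with hnd | hdn
  · calc (n : ℝ) ≤ d := by exact_mod_cast hnd
      _ ≤ 2 * (w + 2) * logb 2 (exp 1 * (w + 2)) * d :=
        le_mul_of_one_le_left d.cast_nonneg (by nlinarith [(Nat.cast_nonneg w : (0 : ℝ) ≤ w)])
  obtain rfl | hd := d.eq_zero_or_pos
  · rw [← Nat.bot_eq_zero, Iic_bot, sum_singleton, Nat.bot_eq_zero, Nat.choose_zero_right,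
      one_pow] at h
    exact absurd h (Nat.one_lt_two_pow hdn.ne').not_ge
  have h2n : (2 : ℝ) ^ n ≤ (exp 1 * n / d) ^ (d * (w + 1)) := by
    rw [pow_mul]
    calc (2 : ℝ) ^ n ≤ (∑ k ∈ Iic d, n.choose k : ℝ) ^ (w + 1) := by exact_mod_cast h
      _ ≤ _ := pow_le_pow_left₀ (by positivity) (sum_choose_le_exp_mul_div_pow hd hdn.le) _
  have hlog := logb_le_logb_of_le one_lt_two (by positivity) h2n
  rw [logb_pow, logb_pow, logb_self_eq_one one_lt_two] at hlog
  refine le_of_le_mul_logb (by exact_mod_cast hd.trans hdn) (by exact_mod_cast hd) (by linarith) ?_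
  push_cast at hlog
  linarith

theorem vc_dimension_cashflow_class_general
    {m : ℕ} (T t w : ℕ)
    (f : ℕ → (Fin m → ℝ) → ℝ)
    (𝓗 : ℕ → Set ((Fin m → ℝ) → ℝ)) (d : ℕ)
    (h𝓗 : ∀ s, t + 1 ≤ s → s ≤ t + w + 1 → VCDimLE (𝓗 s) d) :
    VCDimLE
      {g : (Fin (T + 1) → Fin m → ℝ) → ℝ | ∃ h : ℕ → (Fin m → ℝ) → ℝ,
        (∀ s, t + 1 ≤ s → s ≤ t + w + 1 → h s ∈ 𝓗 s) ∧
          g = fun x => cashflow f h (t + 1) w (pathExt x)}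
      (2 * (w + 2) * Real.logb 2 (Real.exp 1 * (w + 2)) * d) := fun _ _ hx =>
  le_of_two_pow_le_sum_choose_pow (two_pow_le_of_shatters_cashflowClass h𝓗 hx)

/-- **VC-dimension of the cash flow class** (Proposition 5.6).
If `vc(𝓗_s) ≤ d` for `s = t+1, …, t+w+1` and the payoffs `f_s` are nonnegative, then the class
`𝓖_t = {ϑ_{t+1:w}(f,h) : h_s ∈ 𝓗_s}` of cash flow functions on `(ℝ^m)^{T+1}` is a VC-class
with `vc(𝓖_t) ≤ c(w)·d`, where `c(w) = 2(w+2)log₂(e(w+2))`. -/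
theorem vc_dimension_cashflow_class
    {m : ℕ} (T t w : ℕ) (htT : t < T) (hw : t + w + 1 ≤ T)
    (f : ℕ → (Fin m → ℝ) → ℝ) (hf : ∀ s x, 0 ≤ f s x)
    (𝓗 : ℕ → Set ((Fin m → ℝ) → ℝ)) (d : ℕ) (hd : 1 ≤ d)
    (h𝓗 : ∀ s, t + 1 ≤ s → s ≤ t + w + 1 → VCDimLE (𝓗 s) d) :
    VCDimLE
      {g : (Fin (T + 1) → Fin m → ℝ) → ℝ | ∃ h : ℕ → (Fin m → ℝ) → ℝ,
        (∀ s, t + 1 ≤ s → s ≤ t + w + 1 → h s ∈ 𝓗 s) ∧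
          g = fun x => cashflow f h (t + 1) w (pathExt x)}
      (2 * (w + 2) * Real.logb 2 (Real.exp 1 * (w + 2)) * d) :=
  vc_dimension_cashflow_class_general T t w f 𝓗 d h𝓗
end
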